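/- arXiv:1703.01546 — 4 statements merged into one kernel-verified Lean document; each statement's English description precedes it below -/
import Mathlib

section
/- Let p, q be coprime positive integers, let ε > 0 and a₀ > 0 satisfy 2ε < a₀^{-2} and a₀^{-2} < 1/q − 2ε. Then there exists a constant c > 0 such that for every a > 0 with |a^{-2} − a₀^{-2}| ≤ cε and every (j,k,l) ∈ (ℤ² \ {(0,0)}) × {0,1} with λ_{j,k,l}(a₀) ≠ 0, one has |λ_{j,k,l}(a)| ≥ cε(k² + |j|). -/
/-!
Write `λ_{j,k,l}(a) = ((pj)² − (qk²)²)/q² ± a⁻² k²`. When the integer `(pj)² − (qk²)²`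
vanishes, `|λ| = a⁻² k²` and `|j| ≤ qk²`, so `a⁻² ≥ ε` suffices. Otherwise it is at least
`|pj| + qk² ≥ |j| + qk²` in absolute value (a difference of two distinct integer squares is at
least the sum of the roots), so `|λ| ≥ |j|/q² + (1/q − a⁻²) k²`, and `a⁻² ≤ 1/q − ε` suffices.
Both bounds on `a⁻²` survive a perturbation of size `ε/(q+1)` of `a₀⁻²`.
-/

/-- The eigenvalue `λ_{j,k,l}(a) = (pj/q)² − k⁴ + (−1)^l a^{-2} k²`. -/
noncomputable def lam (p q : ℕ) (a : ℝ) (j k : ℤ) (l : Fin 2) : ℝ :=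
  ((p : ℝ) * j / q) ^ 2 - (k : ℝ) ^ 4 + (-1) ^ (l : ℕ) * a⁻¹ ^ 2 * (k : ℝ) ^ 2

lemma abs_add_abs_le_abs_sq_sub_sq {m n : ℤ} (h : m ^ 2 ≠ n ^ 2) :
    |m| + |n| ≤ |m ^ 2 - n ^ 2| := by
  have hne : |m| - |n| ≠ 0 := sub_ne_zero.mpr fun h' => h ((sq_eq_sq_iff_abs_eq_abs m n).mpr h')
  calc |m| + |n| ≤ |(|m| - |n|)| * (|m| + |n|) :=
        le_mul_of_one_le_left (by positivity) (Int.one_le_abs hne)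
    _ = |(|m| - |n|) * (|m| + |n|)| := by
      rw [abs_mul, abs_of_nonneg (by positivity : 0 ≤ |m| + |n|)]
    _ = |m ^ 2 - n ^ 2| := by rw [← sq_abs m, ← sq_abs n]; ring_nf

lemma abs_neg_one_pow_mul_sq_mul_sq (n : ℕ) (x y : ℝ) :
    |(-1) ^ n * x ^ 2 * y ^ 2| = x ^ 2 * y ^ 2 := by
  rw [abs_mul, abs_mul, abs_neg_one_pow, one_mul, abs_of_nonneg (sq_nonneg x),
    abs_of_nonneg (sq_nonneg y)]

section

variable {p q : ℕ} {a δ : ℝ} {j k : ℤ} {l : Fin 2}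

lemma lam_eq_div_add (hq : q ≠ 0) :
    lam p q a j k l = (((p * j) ^ 2 - (q * k ^ 2) ^ 2 : ℤ) : ℝ) / q ^ 2
      + (-1) ^ (l : ℕ) * a⁻¹ ^ 2 * k ^ 2 := by
  unfold lam
  push_cast
  field_simp

lemma abs_le_mul_sq_of_mul_sq_eq (hp : 0 < p) (h : ((p : ℤ) * j) ^ 2 = (q * k ^ 2) ^ 2) :
    |j| ≤ q * k ^ 2 := by
  have h' := (sq_eq_sq_iff_abs_eq_abs _ _).mp h
  rw [abs_mul, abs_mul, abs_sq, Nat.abs_cast, Nat.abs_cast] at h'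
  rw [← h']
  exact le_mul_of_one_le_left (abs_nonneg j) (by exact_mod_cast hp)

lemma abs_add_mul_sq_le_abs_sq_sub_sq (hp : 0 < p) (h : ((p : ℤ) * j) ^ 2 ≠ (q * k ^ 2) ^ 2) :
    |j| + q * k ^ 2 ≤ |((p : ℤ) * j) ^ 2 - (q * k ^ 2) ^ 2| := by
  have h' := abs_add_abs_le_abs_sq_sub_sq h
  rw [abs_mul, abs_mul, abs_sq, Nat.abs_cast, Nat.abs_cast] at h'
  have : |j| ≤ p * |j| := le_mul_of_one_le_left (abs_nonneg j) (by exact_mod_cast hp)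
  linarith

lemma le_abs_lam_of_sq_eq (hp : 0 < p) (hq : q ≠ 0) (h : ((p : ℤ) * j) ^ 2 = (q * k ^ 2) ^ 2)
    (hδ : 0 ≤ δ) (hA : δ * (q + 1) ≤ a⁻¹ ^ 2) :
    δ * (k ^ 2 + |(j : ℝ)|) ≤ |lam p q a j k l| := by
  have hj : |(j : ℝ)| ≤ q * k ^ 2 := by exact_mod_cast abs_le_mul_sq_of_mul_sq_eq hp h
  rw [lam_eq_div_add hq, h, sub_self, Int.cast_zero, zero_div, zero_add,
    abs_neg_one_pow_mul_sq_mul_sq]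
  calc δ * (k ^ 2 + |(j : ℝ)|) ≤ δ * (k ^ 2 + q * k ^ 2) := by gcongr
    _ = δ * (q + 1) * k ^ 2 := by ring
    _ ≤ a⁻¹ ^ 2 * k ^ 2 := by gcongr

lemma le_abs_lam_of_sq_ne (hp : 0 < p) (hq : q ≠ 0) (h : ((p : ℤ) * j) ^ 2 ≠ (q * k ^ 2) ^ 2)
    (hδ : δ * q ^ 2 ≤ 1) (hA : a⁻¹ ^ 2 + δ ≤ 1 / q) :
    δ * (k ^ 2 + |(j : ℝ)|) ≤ |lam p q a j k l| := by
  have hq' : (0 : ℝ) < q := by positivity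
  set D : ℤ := ((p : ℤ) * j) ^ 2 - (q * k ^ 2) ^ 2
  have hD : |(j : ℝ)| + q * k ^ 2 ≤ |(D : ℝ)| := by
    exact_mod_cast abs_add_mul_sq_le_abs_sq_sub_sq hp h
  have hlam : |(D : ℝ)| / q ^ 2 - a⁻¹ ^ 2 * k ^ 2 ≤ |lam p q a j k l| := by
    have := abs_sub_abs_le_abs_add ((D : ℝ) / q ^ 2) ((-1) ^ (l : ℕ) * a⁻¹ ^ 2 * k ^ 2)
    rwa [abs_div, abs_neg_one_pow_mul_sq_mul_sq, abs_of_pos (by positivity : (0 : ℝ) < q ^ 2),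
      ← lam_eq_div_add hq] at this
  have hj : δ * |(j : ℝ)| ≤ |(j : ℝ)| / q ^ 2 := by
    rw [le_div_iff₀ (by positivity), mul_right_comm]
    exact mul_le_of_le_one_left (abs_nonneg _) hδ
  calc δ * (k ^ 2 + |(j : ℝ)|) ≤ (1 / q - a⁻¹ ^ 2) * k ^ 2 + |(j : ℝ)| / q ^ 2 := by
        rw [mul_add]; gcongr; linarith
    _ = (|(j : ℝ)| + q * k ^ 2) / q ^ 2 - a⁻¹ ^ 2 * k ^ 2 := by field_simp; ring
    _ ≤ |(D : ℝ)| / q ^ 2 - a⁻¹ ^ 2 * k ^ 2 := by gcongr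
    _ ≤ |lam p q a j k l| := hlam

lemma le_abs_lam (hp : 0 < p) (hq : q ≠ 0) (hδ₀ : 0 ≤ δ) (hδ : δ * q ^ 2 ≤ 1)
    (hlo : δ * (q + 1) ≤ a⁻¹ ^ 2) (hhi : a⁻¹ ^ 2 + δ ≤ 1 / q) :
    δ * (k ^ 2 + |(j : ℝ)|) ≤ |lam p q a j k l| := by
  by_cases h : ((p : ℤ) * j) ^ 2 = (q * k ^ 2) ^ 2
  · exact le_abs_lam_of_sq_eq hp hq h hδ₀ hlo
  · exact le_abs_lam_of_sq_ne hp hq h hδ hhi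

end

theorem stmt2_general (p q : ℕ) (hp : 0 < p) (hq : 0 < q)
    (ε a₀ : ℝ) (hε : 0 < ε)
    (h1 : 2 * ε < a₀⁻¹ ^ 2) (h2 : a₀⁻¹ ^ 2 < 1 / q - 2 * ε) :
    ∃ c : ℝ, 0 < c ∧ ∀ a : ℝ, 0 < a → |a⁻¹ ^ 2 - a₀⁻¹ ^ 2| ≤ c * ε →
      ∀ (j k : ℤ) (l : Fin 2), (j, k) ≠ (0, 0) → lam p q a₀ j k l ≠ 0 →
        c * ε * ((k : ℝ) ^ 2 + |(j : ℝ)|) ≤ |lam p q a j k l| := by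
  have hq' : (0 : ℝ) < q := by exact_mod_cast hq
  refine ⟨1 / (q + 1), by positivity, fun a _ ha j k l _ _ => ?_⟩
  have hcε : 1 / (q + 1) * ε * (q + 1) = ε := by field_simp
  have hεq : ε * q < 1 := by
    have := (lt_div_iff₀ hq').mp (by linarith : 2 * ε < 1 / q)
    linarith
  have hq_div : (q : ℝ) / (q + 1) ≤ 1 := (div_le_one (by positivity)).mpr (by linarith)
  have hδε : 1 / (q + 1) * ε ≤ ε := by
    rw [one_div, ← div_eq_inv_mul]
    exact div_le_self hε.le (by linarith)
  rw [abs_le] at ha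
  apply le_abs_lam hp hq.ne' (by positivity)
  · calc 1 / (q + 1) * ε * q ^ 2 = ε * q * (q / (q + 1)) := by ring
      _ ≤ ε * q * 1 := by gcongr
      _ ≤ 1 := by linarith
  · rw [hcε]; linarith
  · linarith

theorem stmt2 (p q : ℕ) (hp : 0 < p) (hq : 0 < q) (hpq : Nat.Coprime p q)
    (ε a₀ : ℝ) (hε : 0 < ε) (ha₀ : 0 < a₀)
    (h1 : 2 * ε < a₀⁻¹ ^ 2) (h2 : a₀⁻¹ ^ 2 < 1 / q - 2 * ε) :
    ∃ c : ℝ, 0 < c ∧ ∀ a : ℝ, 0 < a → |a⁻¹ ^ 2 - a₀⁻¹ ^ 2| ≤ c * ε →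
      ∀ (j k : ℤ) (l : Fin 2), (j, k) ≠ (0, 0) → lam p q a₀ j k l ≠ 0 →
        c * ε * ((k : ℝ) ^ 2 + |(j : ℝ)|) ≤ |lam p q a j k l| :=
  stmt2_general p q hp hq ε a₀ hε h1 h2
end

section
/- Let p, q be coprime positive integers, let ε > 0 and a₀ > 0 satisfy 2ε < a₀^{-2} and a₀^{-2} < 1/q − 2ε. Then there exist constants c > 0 and C > 0 such that for every a > 0 with |a^{-2} − a₀^{-2}| ≤ cε and every (j,k,l) ∈ (ℤ² \ {(0,0)}) × {0,1} with λ_{j,k,l}(a₀) ≠ 0, one has k² ≤ (C/ε)·|λ_{j,k,l}(a)|. (This is the scalar multiplier bound behind the fact that the inverse (PLP)^{-1}∂_s² gains two spatial derivatives and is bounded by O(ε^{-1}).) -/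
/-- Key arithmetic lemma: for `ε < b < 1/q - ε`, `m ∈ ℕ`, `k ≠ 0`, `|σ| = 1`,
the quantity `(m/q)² - k⁴ + σ b k²` is at least `(ε/2) k²` in absolute value. -/
lemma key (q : ℕ) (hq : 0 < q) (m : ℕ) (k : ℤ) (hk : k ≠ 0) (b ε σ : ℝ)
    (hε : 0 < ε) (hb1 : ε < b) (hb2 : b < 1 / q - ε) (hσ : |σ| = 1) :
    ε / 2 * (k : ℝ) ^ 2 ≤ |((m : ℝ) / q) ^ 2 - (k : ℝ) ^ 4 + σ * b * (k : ℝ) ^ 2| := by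
  by_contra hcon
  push_neg at hcon
  have hq' : (0:ℝ) < q := Nat.cast_pos.mpr hq
  have hK1 : (1:ℝ) ≤ (k:ℝ)^2 := by
    have h1 : (1:ℤ) ≤ k^2 := by rcases lt_or_gt_of_ne hk with h|h <;> nlinarith
    exact_mod_cast h1
  set K : ℝ := (k:ℝ)^2 with hKdef
  set L : ℝ := ((m : ℝ)/q)^2 - (k:ℝ)^4 + σ*b*K with hLdef
  have hKpos : 0 < K := lt_of_lt_of_le one_pos hK1
  have hbpos : 0 < b := lt_trans hε hb1
  -- the basic integer d
  set d : ℤ := (m:ℤ) - q * k^2 with hddef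
  have hid : ((d:ℝ)) * ((m:ℝ) + q*K) = q^2 * (L - σ*(b*K)) := by
    have : (k:ℝ)^4 = K^2 := by rw [hKdef]; ring
    rw [hLdef, this, hddef]
    push_cast
    field_simp
    ring
  clear_value K L d
  -- |L| is small
  have hLsmall : |L| < ε/2 * K := hcon
  -- |σ b K| = b K
  have hσbK : |σ*(b*K)| = b*K := by
    rw [abs_mul, hσ, one_mul, abs_of_pos (mul_pos hbpos hKpos)]
  -- lower bound for |L - σ b K|
  have hlow : ε/2 * K < |L - σ*(b*K)| := by
    have h := abs_sub_abs_le_abs_sub (σ*(b*K)) L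
    rw [hσbK] at h
    have : |σ*(b*K) - L| = |L - σ*(b*K)| := abs_sub_comm _ _
    rw [this] at h
    nlinarith [abs_nonneg L]
  -- upper bound for |L - σ b K|
  have hup : |L - σ*(b*K)| < K / q := by
    have h := abs_sub (L) (σ*(b*K))
    rw [hσbK] at h
    have hb2' : b * K < (1/q - ε) * K := by nlinarith
    have : |L| + b*K < ε/2*K + (1/q - ε)*K := by nlinarith
    have hfin : ε/2*K + (1/q - ε)*K ≤ K / q := by
      have : ε/2*K + (1/q - ε)*K = K/q - ε/2*K := by ring
      nlinarith
    calc |L - σ*(b*K)| ≤ |L| + |σ*(b*K)| := abs_sub L (σ*(b*K))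
      _ = |L| + b*K := by rw [hσbK]
      _ < ε/2*K + (1/q - ε)*K := this
      _ ≤ K / q := hfin
  -- d ≠ 0
  have hdne : d ≠ 0 := by
    intro h0
    rw [h0] at hid
    have h0' : (q:ℝ)^2 * (L - σ*(b*K)) = 0 := by
      rw [← hid]; push_cast; ring
    have hq2 : (q:ℝ)^2 ≠ 0 := by positivity
    have hz : L - σ*(b*K) = 0 := by
      rcases mul_eq_zero.mp h0' with h | h
      · exact absurd h hq2
      · exact h
    rw [hz, abs_zero] at hlow
    have hp2 : (0:ℝ) < ε/2*K := mul_pos (by linarith) hKpos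
    linarith
  have hd1 : (1:ℝ) ≤ |(d:ℝ)| := by
    have : (1:ℤ) ≤ |d| := Int.one_le_abs hdne
    calc (1:ℝ) ≤ ((|d| : ℤ) : ℝ) := by exact_mod_cast this
      _ = |(d:ℝ)| := by push_cast; ring
  -- m + qK ≥ qK
  have hm : (0:ℝ) ≤ (m:ℝ) := Nat.cast_nonneg m
  have hmqK : q * K ≤ (m:ℝ) + q*K := by linarith
  have hqK : 0 < q * K := mul_pos hq' hKpos
  -- contradiction
  have habs : |(d:ℝ) * ((m:ℝ) + q*K)| = |(d:ℝ)| * ((m:ℝ) + q*K) := by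
    rw [abs_mul, abs_of_nonneg (show (0:ℝ) ≤ (m:ℝ) + q*K by linarith)]
  have h1 : q * K ≤ |(d:ℝ)| * ((m:ℝ) + q*K) := by
    calc q * K = 1 * (q*K) := (one_mul _).symm
      _ ≤ |(d:ℝ)| * ((m:ℝ) + q*K) := by
          apply mul_le_mul hd1 hmqK (le_of_lt hqK) (abs_nonneg _)
  have h2 : |(d:ℝ)| * ((m:ℝ) + q*K) < q * K := by
    rw [← habs, hid, abs_mul]
    have : |(q:ℝ)^2| = (q:ℝ)^2 := abs_of_pos (by positivity)
    rw [this]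
    calc (q:ℝ)^2 * |L - σ*(b*K)| < (q:ℝ)^2 * (K/q) := by
          apply mul_lt_mul_of_pos_left hup (by positivity)
      _ = q * K := by
          field_simp
  linarith

theorem stmt3 (p q : ℕ) (hp : 0 < p) (hq : 0 < q) (hpq : Nat.Coprime p q)
    (ε a₀ : ℝ) (hε : 0 < ε) (ha₀ : 0 < a₀)
    (h1 : 2 * ε < a₀⁻¹ ^ 2) (h2 : a₀⁻¹ ^ 2 < 1 / q - 2 * ε) :
    ∃ c C : ℝ, 0 < c ∧ 0 < C ∧ ∀ a : ℝ, 0 < a → |a⁻¹ ^ 2 - a₀⁻¹ ^ 2| ≤ c * ε →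
      ∀ (j k : ℤ) (l : Fin 2), (j, k) ≠ (0, 0) → lam p q a₀ j k l ≠ 0 →
        (k : ℝ) ^ 2 ≤ (C / ε) * |lam p q a j k l| := by
  refine ⟨1, 2, one_pos, two_pos, ?_⟩
  intro a ha hab j k l _ _
  by_cases hk : k = 0
  · subst hk
    simp only [Int.cast_zero]
    have : (0:ℝ) ≤ (2 / ε) * |lam p q a j 0 l| := by positivity
    simpa using this
  · -- b := a⁻¹^2 satisfies ε < b < 1/q - ε
    rw [one_mul] at hab
    have habs := abs_le.mp hab
    have hb1 : ε < a⁻¹^2 := by linarith [habs.2]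
    have hb2 : a⁻¹^2 < 1/q - ε := by linarith [habs.1]
    -- rewrite lam using m = p * |j|
    have hσ : |((-1:ℝ)) ^ (l:ℕ)| = 1 := by
      rw [abs_pow, abs_neg, abs_one, one_pow]
    have hm : (((p * j.natAbs : ℕ) : ℝ) / q) ^ 2 = ((p:ℝ) * j / q)^2 := by
      push_cast [Nat.cast_natAbs]
      rw [div_pow, div_pow, mul_pow, mul_pow, sq_abs]
    have hlam : lam p q a j k l
        = (((p * j.natAbs : ℕ) : ℝ) / q) ^ 2 - (k:ℝ)^4 + (-1)^(l:ℕ) * a⁻¹^2 * (k:ℝ)^2 := by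
      unfold lam
      rw [hm]
    have hkey := key q hq (p * j.natAbs) k hk (a⁻¹^2) ε ((-1:ℝ)^(l:ℕ)) hε hb1 hb2 hσ
    rw [← hlam] at hkey
    rw [div_mul_eq_mul_div, le_div_iff₀ hε]
    nlinarith [hkey]
end

section
/- Let p, q be coprime positive integers, let a₀ > 0 with a₀^{-2} ≤ 1/q, and let j ≥ 0 and k be integers such that |pj/q − k²| ≥ 1/q. Then for every l ∈ {0,1}, |λ_{j,k,l}(a₀)| ≥ pj/q² + k²(1/q − a₀^{-2}). -/
lemma sub_abs_mul_le_abs_sq_sub_sq_add {X K δ c : ℝ} (hX : 0 ≤ X) (hK : 0 ≤ K)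
    (hδ : δ ≤ |X - K|) : (X + K) * δ - |c| * K ≤ |X ^ 2 - K ^ 2 + c * K| := by
  have hsq : |X ^ 2 - K ^ 2| = (X + K) * |X - K| := by
    rw [sq_sub_sq, abs_mul, abs_of_nonneg (add_nonneg hX hK)]
  calc (X + K) * δ - |c| * K
      ≤ |X ^ 2 - K ^ 2| - |c * K| := by
        rw [hsq, abs_mul, abs_of_nonneg hK]
        gcongr
    _ ≤ |X ^ 2 - K ^ 2 + c * K| := by
        simpa using abs_sub_abs_le_abs_sub (X ^ 2 - K ^ 2) (-(c * K))

lemma lam_eq_sq_sub_sq_add (p q : ℕ) (a : ℝ) (j k : ℤ) (l : Fin 2) :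
    lam p q a j k l = ((p : ℝ) * j / q) ^ 2 - ((k : ℝ) ^ 2) ^ 2
      + (-1) ^ (l : ℕ) * a⁻¹ ^ 2 * (k : ℝ) ^ 2 := by
  rw [lam]; ring

theorem stmt4_general (p q : ℕ)
    (a₀ : ℝ)
    (j k : ℤ) (hj : 0 ≤ j)
    (hjk : 1 / (q : ℝ) ≤ |(p : ℝ) * j / q - (k : ℝ) ^ 2|) (l : Fin 2) :
    (p : ℝ) * j / q ^ 2 + (k : ℝ) ^ 2 * (1 / q - a₀⁻¹ ^ 2) ≤ |lam p q a₀ j k l| := by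
  have hX : (0 : ℝ) ≤ p * j / q := by positivity
  have hsign : |(-1 : ℝ) ^ (l : ℕ) * a₀⁻¹ ^ 2| = a₀⁻¹ ^ 2 := by
    rw [abs_mul, abs_pow, abs_neg, abs_one, one_pow, one_mul, abs_of_nonneg (by positivity)]
  have key := sub_abs_mul_le_abs_sq_sub_sq_add (c := (-1) ^ (l : ℕ) * a₀⁻¹ ^ 2) hX
    (sq_nonneg (k : ℝ)) hjk
  rw [hsign, ← lam_eq_sq_sub_sq_add] at key
  convert key using 1
  ring

theorem stmt4 (p q : ℕ) (hp : 0 < p) (hq : 0 < q) (hpq : Nat.Coprime p q)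
    (a₀ : ℝ) (ha₀ : 0 < a₀) (ha₀q : a₀⁻¹ ^ 2 ≤ 1 / q)
    (j k : ℤ) (hj : 0 ≤ j)
    (hjk : 1 / (q : ℝ) ≤ |(p : ℝ) * j / q - (k : ℝ) ^ 2|) (l : Fin 2) :
    (p : ℝ) * j / q ^ 2 + (k : ℝ) ^ 2 * (1 / q - a₀⁻¹ ^ 2) ≤ |lam p q a₀ j k l| :=
  stmt4_general p q a₀ j k hj hjk l
end

section
/- Let p, q, j₀, k₀ be positive integers with p, q coprime, let l₀ ∈ {0,1}, and let a₀ > 0 satisfy a₀^{-2} = (−1)^{l₀}(k₀² − (p j₀/(q k₀))²). Then for every (j,k,l) ∈ ℤ² × {0,1} with λ_{j,k,l}(a₀) ≠ 0, one has |λ_{j,k,l}(a₀)| ≥ 1/(q k₀)². In particular the nonzero eigenvalues of the linearized operator are uniformly bounded away from zero. -/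
theorem one_div_le_abs_of_mul_eq_intCast {d x : ℝ} (hd : 0 < d) {n : ℤ} (h : d * x = n)
    (hx : x ≠ 0) : 1 / d ≤ |x| := by
  have hn : n ≠ 0 := by
    rintro rfl
    exact hx ((mul_eq_zero.mp (by exact_mod_cast h)).resolve_left hd.ne')
  rw [div_le_iff₀ hd, ← abs_of_pos hd, ← abs_mul, mul_comm, h]
  exact_mod_cast Int.one_le_abs hn

theorem exists_sq_mul_lam_eq_intCast {p q j₀ k₀ : ℕ} (hq : 0 < q) (hk₀ : 0 < k₀) {l₀ : Fin 2}
    {a : ℝ} (ha : a⁻¹ ^ 2 = (-1) ^ (l₀ : ℕ) * ((k₀ : ℝ) ^ 2 - ((p : ℝ) * j₀ / ((q : ℝ) * k₀)) ^ 2))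
    (j k : ℤ) (l : Fin 2) : ∃ n : ℤ, ((q : ℝ) * k₀) ^ 2 * lam p q a j k l = n := by
  have hq' : (q : ℝ) ≠ 0 := Nat.cast_ne_zero.mpr hq.ne'
  have hk' : (k₀ : ℝ) ≠ 0 := Nat.cast_ne_zero.mpr hk₀.ne'
  refine ⟨((p : ℤ) * j * k₀) ^ 2 - k ^ 4 * q ^ 2 * k₀ ^ 2 +
    (-1) ^ (l : ℕ) * (-1) ^ (l₀ : ℕ) * (k ^ 2 * ((q : ℤ) ^ 2 * k₀ ^ 4 - (p : ℤ) ^ 2 * j₀ ^ 2)), ?_⟩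
  simp only [lam, ha]
  push_cast
  field_simp

theorem stmt7_general (p q j₀ k₀ : ℕ) (hq : 0 < q) (hk₀ : 0 < k₀)
    (l₀ : Fin 2) (a₀ : ℝ)
    (ha : a₀⁻¹ ^ 2 = (-1) ^ (l₀ : ℕ) * ((k₀ : ℝ) ^ 2 - ((p : ℝ) * j₀ / ((q : ℝ) * k₀)) ^ 2)) :
    ∀ (j k : ℤ) (l : Fin 2), lam p q a₀ j k l ≠ 0 →
      1 / ((q : ℝ) * k₀) ^ 2 ≤ |lam p q a₀ j k l| := by
  intro j k l hne
  obtain ⟨n, hn⟩ := exists_sq_mul_lam_eq_intCast hq hk₀ ha j k l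
  exact one_div_le_abs_of_mul_eq_intCast (by positivity) hn hne

theorem stmt7 (p q j₀ k₀ : ℕ) (hp : 0 < p) (hq : 0 < q) (hj₀ : 0 < j₀) (hk₀ : 0 < k₀)
    (hpq : Nat.Coprime p q) (l₀ : Fin 2) (a₀ : ℝ) (ha₀ : 0 < a₀)
    (ha : a₀⁻¹ ^ 2 = (-1) ^ (l₀ : ℕ) * ((k₀ : ℝ) ^ 2 - ((p : ℝ) * j₀ / ((q : ℝ) * k₀)) ^ 2)) :
    ∀ (j k : ℤ) (l : Fin 2), lam p q a₀ j k l ≠ 0 →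
      1 / ((q : ℝ) * k₀) ^ 2 ≤ |lam p q a₀ j k l| :=
  stmt7_general p q j₀ k₀ hq hk₀ l₀ a₀ ha
end
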